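/- arXiv:0704.0112 — 2 statements merged into one kernel-verified Lean document; each statement's English description precedes it below -/
import Mathlib

section
/- For every natural number n ≥ 2, the number of XOR-triples contained in {1, 2, …, 2^n − 1} is exactly (2^n − 1)(2^n − 2)/6. -/
/-- An XOR-triple is a 3-element set of positive natural numbers `{a, b, c}`
with `a ^^^ b = c`; this condition is symmetric in `a`, `b`, `c`. -/
def IsXorTriple (t : Finset ℕ) : Prop :=
  t.card = 3 ∧ (∀ x ∈ t, 0 < x) ∧ ∃ a ∈ t, ∃ b ∈ t, a ≠ b ∧ a ^^^ b ∈ t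

instance : DecidablePred IsXorTriple := fun t => by
  unfold IsXorTriple; infer_instance

/-!
Every pair `{a, b}` of distinct positive numbers lies in exactly one XOR-triple, namely
`{a, b, a ^^^ b}`, and every XOR-triple contains exactly three such pairs. Since
`{1, …, 2^n - 1}` is closed under XOR of distinct elements, double counting gives
`3 · #triples = (2^n - 1).choose 2`.
-/

open Finset

lemma Nat.xor_ne_self_left {a b : ℕ} (hb : b ≠ 0) : a ^^^ b ≠ a := by
  simpa using (Nat.xor_right_inj (x := a) (y := b) (z := 0)).not.mpr hb

lemma Nat.xor_ne_self_right {a b : ℕ} (ha : a ≠ 0) : a ^^^ b ≠ b := by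
  rw [Nat.xor_comm]
  exact Nat.xor_ne_self_left ha

lemma card_insert_xor {a b : ℕ} (ha : a ≠ 0) (hb : b ≠ 0) (hab : a ≠ b) :
    #{a, b, a ^^^ b} = 3 := by
  have hxa := Nat.xor_ne_self_left (a := a) hb
  have hxb := Nat.xor_ne_self_right (b := b) ha
  rw [card_insert_of_notMem (by simp [hab, hxa.symm]),
    card_insert_of_notMem (by simp [hxb.symm]), card_singleton]

lemma xor_mem_insert_xor {a b x y : ℕ} (hx : x ∈ ({a, b, a ^^^ b} : Finset ℕ))
    (hy : y ∈ ({a, b, a ^^^ b} : Finset ℕ)) (hxy : x ≠ y) :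
    x ^^^ y ∈ ({a, b, a ^^^ b} : Finset ℕ) := by
  simp only [mem_insert, mem_singleton] at hx hy ⊢
  rcases hx with rfl | rfl | rfl <;> rcases hy with rfl | rfl | rfl <;>
    simp [Nat.xor_comm] at hxy ⊢

lemma isXorTriple_insert_xor {a b : ℕ} (ha : 0 < a) (hb : 0 < b) (hab : a ≠ b) :
    IsXorTriple {a, b, a ^^^ b} := by
  refine ⟨card_insert_xor ha.ne' hb.ne' hab, ?_, a, by simp, b, by simp, hab, by simp⟩
  simp only [mem_insert, mem_singleton, forall_eq_or_imp, forall_eq]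
  exact ⟨ha, hb, Nat.pos_of_ne_zero (Nat.xor_ne_zero_iff.mpr hab)⟩

lemma IsXorTriple.eq_insert_xor {t : Finset ℕ} (ht : IsXorTriple t) {a b : ℕ} (ha : a ∈ t)
    (hb : b ∈ t) (hab : a ≠ b) : t = {a, b, a ^^^ b} := by
  obtain ⟨hcard, hpos, x, hx, y, hy, hxy, hxyt⟩ := ht
  have ht_eq : t = {x, y, x ^^^ y} := by
    refine (eq_of_subset_of_card_le ?_ ?_).symm
    · simp [insert_subset_iff, hx, hy, hxyt]
    · rw [hcard, card_insert_xor (hpos x hx).ne' (hpos y hy).ne' hxy]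
  have habt : a ^^^ b ∈ t := ht_eq ▸ xor_mem_insert_xor (ht_eq ▸ ha) (ht_eq ▸ hb) hab
  refine (eq_of_subset_of_card_le ?_ ?_).symm
  · simp [insert_subset_iff, ha, hb, habt]
  · rw [hcard, card_insert_xor (hpos a ha).ne' (hpos b hb).ne' hab]

section DoubleCounting

variable {S : Finset ℕ}

lemma card_xorTriples_above_pair (hS : ∀ a ∈ S, 0 < a)
    (hS_xor : ∀ a ∈ S, ∀ b ∈ S, a ≠ b → a ^^^ b ∈ S) {p : Finset ℕ}
    (hp : p ∈ S.powersetCard 2) :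
    #((S.powerset.filter IsXorTriple).bipartiteAbove (· ⊆ ·) p) = 1 := by
  obtain ⟨hpS, hp2⟩ := mem_powersetCard.mp hp
  obtain ⟨a, b, hab, rfl⟩ := card_eq_two.mp hp2
  have ha : a ∈ S := hpS (by simp)
  have hb : b ∈ S := hpS (by simp)
  rw [card_eq_one]
  refine ⟨{a, b, a ^^^ b}, eq_singleton_iff_unique_mem.mpr ⟨?_, ?_⟩⟩
  · simp [bipartiteAbove, insert_subset_iff, ha, hb, hS_xor a ha b hb hab,
      isXorTriple_insert_xor (hS a ha) (hS b hb) hab]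
  · simp only [bipartiteAbove, mem_filter, mem_powerset, insert_subset_iff,
      singleton_subset_iff]
    rintro t ⟨⟨-, ht⟩, hat, hbt⟩
    exact ht.eq_insert_xor hat hbt hab

lemma card_pairs_below_xorTriple {t : Finset ℕ}
    (ht : t ∈ S.powerset.filter IsXorTriple) :
    #((S.powersetCard 2).bipartiteBelow (· ⊆ ·) t) = 3 := by
  obtain ⟨htS, htrip⟩ := mem_filter.mp ht
  have hpairs : (S.powersetCard 2).bipartiteBelow (· ⊆ ·) t = t.powersetCard 2 := by
    ext p
    simp only [bipartiteBelow, mem_filter, mem_powersetCard]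
    exact ⟨fun ⟨⟨_, hp2⟩, hpt⟩ => ⟨hpt, hp2⟩,
      fun ⟨hpt, hp2⟩ => ⟨⟨hpt.trans (mem_powerset.mp htS), hp2⟩, hpt⟩⟩
  rw [hpairs, card_powersetCard, htrip.1]
  rfl

theorem three_mul_card_xorTriples (hS : ∀ a ∈ S, 0 < a)
    (hS_xor : ∀ a ∈ S, ∀ b ∈ S, a ≠ b → a ^^^ b ∈ S) :
    3 * #(S.powerset.filter IsXorTriple) = (#S).choose 2 := by
  have h := card_mul_eq_card_mul (· ⊆ ·) (fun p hp => card_xorTriples_above_pair hS hS_xor hp)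
    (fun t ht => card_pairs_below_xorTriple ht)
  rw [card_powersetCard, mul_one] at h
  rw [h, mul_comm]

end DoubleCounting

lemma xor_mem_Icc_one_two_pow_sub_one {n a b : ℕ} (ha : a ∈ Icc 1 (2 ^ n - 1))
    (hb : b ∈ Icc 1 (2 ^ n - 1)) (hab : a ≠ b) : a ^^^ b ∈ Icc 1 (2 ^ n - 1) := by
  rw [mem_Icc] at ha hb ⊢
  have hpos : 0 < a ^^^ b := Nat.pos_of_ne_zero (Nat.xor_ne_zero_iff.mpr hab)
  have hlt : a ^^^ b < 2 ^ n := Nat.xor_lt_two_pow (by omega) (by omega)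
  omega

theorem xor_triple_count_general (n : ℕ) :
    ((Finset.Icc 1 (2 ^ n - 1)).powerset.filter IsXorTriple).card
      = (2 ^ n - 1) * (2 ^ n - 2) / 6 := by
  have h := three_mul_card_xorTriples (S := Icc 1 (2 ^ n - 1))
    (fun a ha => (mem_Icc.mp ha).1) (fun a ha b hb => xor_mem_Icc_one_two_pow_sub_one ha hb)
  rw [Nat.card_Icc, Nat.add_sub_cancel, Nat.choose_two_right] at h
  rw [show 2 ^ n - 2 = 2 ^ n - 1 - 1 by omega]
  omega

theorem xor_triple_count (n : ℕ) (hn : 2 ≤ n) :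
    ((Finset.Icc 1 (2 ^ n - 1)).powerset.filter IsXorTriple).card
      = (2 ^ n - 1) * (2 ^ n - 2) / 6 :=
  xor_triple_count_general n
end

section
/- For every natural number n ≥ 3 and every S with 1 ≤ S ≤ 2^n − 1, the number of XOR-triples contained in {1, 2, …, 2^n − 1} that do NOT contain S equals (2^n − 2)(2^n − 4)/6, which moreover equals 4 · ((2^{n−1} − 1)(2^{n−1} − 2)/6). -/
/-
Each XOR-triple avoiding `S` is spanned by exactly six ordered pairs of its elements, so it
suffices to count ordered pairs `(a, b)` of distinct elements of `U = {1, …, 2^n - 1}` whose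
triple `{a, b, a ^^^ b}` avoids `S`. The first entry is any `a ≠ S`, and then `b` is any element
other than `a`, `S` and `a ^^^ S`; these three are distinct since `0 ∉ U`. Hence
`6 · #triples = (2^n - 2)(2^n - 4)`. The second identity is arithmetic, using `6 ∣ (k - 1)(k - 2)`
for every power of two `k`.
-/

open Finset

def xorTripleOf (a b : ℕ) : Finset ℕ := {a, b, a ^^^ b}

lemma mem_xorTripleOf {a b x : ℕ} : x ∈ xorTripleOf a b ↔ x = a ∨ x = b ∨ x = a ^^^ b := by
  simp [xorTripleOf]

lemma card_xorTripleOf {a b : ℕ} (ha : a ≠ 0) (hb : b ≠ 0) (hab : a ≠ b) :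
    #(xorTripleOf a b) = 3 := by
  rw [xorTripleOf, card_insert_of_notMem, card_pair] <;> simp [eq_comm (b := a ^^^ b), *]

lemma isXorTriple_xorTripleOf {a b : ℕ} (ha : a ≠ 0) (hb : b ≠ 0) (hab : a ≠ b) :
    IsXorTriple (xorTripleOf a b) := by
  refine ⟨card_xorTripleOf ha hb hab, fun x hx => ?_, a, ?_, b, ?_, hab, ?_⟩
  · rcases mem_xorTripleOf.1 hx with rfl | rfl | rfl <;> simp_all [Nat.pos_iff_ne_zero]
  all_goals simp [mem_xorTripleOf]

lemma IsXorTriple.exists_eq_xorTripleOf {t : Finset ℕ} (ht : IsXorTriple t) :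
    ∃ a b, a ≠ 0 ∧ b ≠ 0 ∧ a ≠ b ∧ t = xorTripleOf a b := by
  obtain ⟨hcard, hpos, a, ha, b, hb, hab, hc⟩ := ht
  have ha0 := (hpos a ha).ne'
  have hb0 := (hpos b hb).ne'
  have hsub : xorTripleOf a b ⊆ t := by
    intro x hx
    rcases mem_xorTripleOf.1 hx with rfl | rfl | rfl <;> assumption
  refine ⟨a, b, ha0, hb0, hab, (eq_of_subset_of_card_le hsub ?_).symm⟩
  rw [hcard, card_xorTripleOf ha0 hb0 hab]

lemma IsXorTriple.xorTripleOf_eq {t : Finset ℕ} (ht : IsXorTriple t) {x y : ℕ} (hx : x ∈ t)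
    (hy : y ∈ t) (hxy : x ≠ y) : xorTripleOf x y = t := by
  obtain ⟨a, b, ha, hb, hab, rfl⟩ := ht.exists_eq_xorTripleOf
  ext z
  rw [mem_xorTripleOf] at hx hy
  simp only [mem_xorTripleOf]
  rcases hx with rfl | rfl | rfl <;> rcases hy with rfl | rfl | rfl <;>
    simp_all [Nat.xor_comm] <;> tauto

def xorTriplesAvoiding (U : Finset ℕ) (S : ℕ) : Finset (Finset ℕ) :=
  {t ∈ U.powerset | IsXorTriple t ∧ S ∉ t}

def avoidingPairs (U : Finset ℕ) (S : ℕ) : Finset (ℕ × ℕ) :=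
  {p ∈ U.offDiag | S ∉ xorTripleOf p.1 p.2}

section XorClosed

variable {U : Finset ℕ} (hU : ∀ a ∈ U, ∀ b ∈ U, a ≠ b → a ^^^ b ∈ U)
include hU

lemma xorTripleOf_subset {a b : ℕ} (ha : a ∈ U) (hb : b ∈ U) (hab : a ≠ b) :
    xorTripleOf a b ⊆ U := by
  intro x hx
  rcases mem_xorTripleOf.1 hx with rfl | rfl | rfl
  exacts [ha, hb, hU a ha b hb hab]

variable (hU0 : 0 ∉ U) (S : ℕ)
include hU0

lemma card_avoidingPairs_eq_six_mul :
    #(avoidingPairs U S) = 6 * #(xorTriplesAvoiding U S) := by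
  have hmaps : Set.MapsTo (fun p : ℕ × ℕ => xorTripleOf p.1 p.2) (avoidingPairs U S)
      (xorTriplesAvoiding U S) := by
    rintro ⟨a, b⟩ hp
    simp only [avoidingPairs, coe_filter, mem_offDiag, Set.mem_ofPred_eq] at hp
    obtain ⟨⟨ha, hb, hab⟩, hS⟩ := hp
    simp only [xorTriplesAvoiding, coe_filter, mem_powerset, Set.mem_ofPred_eq]
    exact ⟨xorTripleOf_subset hU ha hb hab, isXorTriple_xorTripleOf
      (ne_of_mem_of_not_mem ha hU0) (ne_of_mem_of_not_mem hb hU0) hab, hS⟩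
  have hfiber : ∀ t ∈ xorTriplesAvoiding U S,
      #{p ∈ avoidingPairs U S | xorTripleOf p.1 p.2 = t} = 6 := by
    intro t ht
    simp only [xorTriplesAvoiding, mem_filter, mem_powerset] at ht
    obtain ⟨htU, ht, hSt⟩ := ht
    rw [← show #t.offDiag = 6 by rw [offDiag_card, ht.1]]
    congr 1
    ext ⟨x, y⟩
    simp only [avoidingPairs, mem_filter, mem_offDiag]
    constructor
    · rintro ⟨⟨⟨-, -, hxy⟩, -⟩, rfl⟩
      exact ⟨by simp [xorTripleOf], by simp [xorTripleOf], hxy⟩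
    · rintro ⟨hx, hy, hxy⟩
      have hspan := ht.xorTripleOf_eq hx hy hxy
      exact ⟨⟨⟨htU hx, htU hy, hxy⟩, hspan ▸ hSt⟩, hspan⟩
  rw [card_eq_sum_card_fiberwise hmaps, sum_congr rfl hfiber, sum_const, smul_eq_mul, mul_comm]

variable {S}

lemma card_filter_avoidingPairs_fst (hS : S ∈ U) {a : ℕ} (ha : a ∈ U) (haS : a ≠ S) :
    #{p ∈ avoidingPairs U S | p.1 = a} = #U - 3 := by
  have hxor : a ^^^ S ∈ (U.erase a).erase S := by
    simp only [mem_erase, ne_eq, xor_left_eq_self_iff, xor_right_eq_self_iff]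
    exact ⟨ne_of_mem_of_not_mem ha hU0, ne_of_mem_of_not_mem hS hU0, hU a ha S hS haS⟩
  have hfiber : {p ∈ avoidingPairs U S | p.1 = a} =
      (((U.erase a).erase S).erase (a ^^^ S)).map (Function.Embedding.sectR a ℕ) := by
    ext ⟨x, y⟩
    simp only [avoidingPairs, mem_filter, mem_offDiag, mem_xorTripleOf, mem_map, mem_erase,
      Function.Embedding.sectR_apply, Prod.mk.injEq]
    constructor
    · rintro ⟨⟨⟨-, hy, hxy⟩, hSxy⟩, rfl⟩
      refine ⟨y, ⟨fun h => hSxy (.inr (.inr ?_)), fun h => hSxy (.inr (.inl h.symm)),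
        hxy.symm, hy⟩, rfl, rfl⟩
      rw [h, xor_cancel_left]
    · rintro ⟨b, ⟨hb, hbS, hba, hbU⟩, rfl, rfl⟩
      refine ⟨⟨⟨ha, hbU, hba.symm⟩, ?_⟩, rfl⟩
      rintro (h | h | h)
      exacts [haS h.symm, hbS h.symm, hb (by rw [h, xor_cancel_left])]
  rw [hfiber, card_map, card_erase_of_mem hxor, card_erase_of_mem (mem_erase.2 ⟨haS.symm, hS⟩),
    card_erase_of_mem ha]
  omega

lemma card_avoidingPairs (hS : S ∈ U) : #(avoidingPairs U S) = (#U - 1) * (#U - 3) := by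
  have hmaps : Set.MapsTo Prod.fst (avoidingPairs U S : Set (ℕ × ℕ)) (U.erase S : Set ℕ) := by
    rintro ⟨a, b⟩ hp
    simp only [avoidingPairs, coe_filter, mem_offDiag, mem_xorTripleOf, Set.mem_ofPred_eq] at hp
    exact mem_erase.2 ⟨fun h => hp.2 (.inl h.symm), hp.1.1⟩
  rw [card_eq_sum_card_fiberwise hmaps, sum_congr rfl fun a ha =>
    card_filter_avoidingPairs_fst hU hU0 hS (mem_erase.1 ha).2 (mem_erase.1 ha).1,
    sum_const, smul_eq_mul, card_erase_of_mem hS]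

theorem six_mul_card_xorTriplesAvoiding (hS : S ∈ U) :
    6 * #(xorTriplesAvoiding U S) = (#U - 1) * (#U - 3) := by
  rw [← card_avoidingPairs_eq_six_mul hU hU0, card_avoidingPairs hU hU0 hS]

end XorClosed

lemma Nat.two_pow_mod_six (m : ℕ) : 2 ^ m % 6 = 1 ∨ 2 ^ m % 6 = 2 ∨ 2 ^ m % 6 = 4 := by
  induction m with
  | zero => simp
  | succ m ih => rw [pow_succ]; omega

lemma Nat.six_dvd_two_pow_sub_one_mul_two_pow_sub_two (m : ℕ) :
    6 ∣ (2 ^ m - 1) * (2 ^ m - 2) := by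
  rw [Nat.dvd_iff_mod_eq_zero, Nat.mul_mod]
  have hmod := Nat.two_pow_mod_six m
  generalize 2 ^ m = k at hmod ⊢
  rcases hmod with h | h | h
  · rw [show (k - 1) % 6 = 0 by omega, zero_mul, Nat.zero_mod]
  · rw [show (k - 2) % 6 = 0 by omega, mul_zero, Nat.zero_mod]
  · rw [show (k - 1) % 6 = 3 by omega, show (k - 2) % 6 = 2 by omega]

lemma Nat.two_pow_sub_two_mul_two_pow_sub_four_div_six (n : ℕ) :
    (2 ^ n - 2) * (2 ^ n - 4) / 6 = 4 * ((2 ^ (n - 1) - 1) * (2 ^ (n - 1) - 2) / 6) := by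
  rcases n with _ | m
  · rfl
  rw [Nat.add_sub_cancel, pow_succ,
    ← Nat.mul_div_assoc _ (Nat.six_dvd_two_pow_sub_one_mul_two_pow_sub_two m)]
  congr 1
  have h1 : 2 ^ m * 2 - 2 = 2 * (2 ^ m - 1) := by omega
  have h2 : 2 ^ m * 2 - 4 = 2 * (2 ^ m - 2) := by omega
  rw [h1, h2]
  ring

theorem xor_triples_avoiding_S_general (n S : ℕ) (hS1 : 1 ≤ S) (hS : S ≤ 2 ^ n - 1) :
    ((Finset.Icc 1 (2 ^ n - 1)).powerset.filter (fun t => IsXorTriple t ∧ S ∉ t)).card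
        = (2 ^ n - 2) * (2 ^ n - 4) / 6 ∧
    (2 ^ n - 2) * (2 ^ n - 4) / 6 = 4 * ((2 ^ (n - 1) - 1) * (2 ^ (n - 1) - 2) / 6) := by
  have hcount := six_mul_card_xorTriplesAvoiding
    (fun _ ha _ hb => xor_mem_Icc_one_two_pow_sub_one ha hb) (by simp) (mem_Icc.2 ⟨hS1, hS⟩)
  rw [Nat.card_Icc, show 2 ^ n - 1 + 1 - 1 - 1 = 2 ^ n - 2 by omega,
    show 2 ^ n - 1 + 1 - 1 - 3 = 2 ^ n - 4 by omega] at hcount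
  refine ⟨?_, Nat.two_pow_sub_two_mul_two_pow_sub_four_div_six n⟩
  change #(xorTriplesAvoiding _ S) = _
  omega

theorem xor_triples_avoiding_S (n S : ℕ) (hn : 3 ≤ n) (hS1 : 1 ≤ S) (hS : S ≤ 2 ^ n - 1) :
    ((Finset.Icc 1 (2 ^ n - 1)).powerset.filter (fun t => IsXorTriple t ∧ S ∉ t)).card
        = (2 ^ n - 2) * (2 ^ n - 4) / 6 ∧
    (2 ^ n - 2) * (2 ^ n - 4) / 6 = 4 * ((2 ^ (n - 1) - 1) * (2 ^ (n - 1) - 2) / 6) :=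
  xor_triples_avoiding_S_general n S hS1 hS
end
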